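/- arXiv:1310.3061 — 2 statements merged into one kernel-verified Lean document; each statement's English description precedes it below -/
import Mathlib

section
/- Let 0 < Y < 1 and let G, M, a be real numbers with −G < a < M. Then, with all complex powers taken in the principal branch, (M − (a+iy))^Y + (G + (a+iy))^Y = 2·cos(πY/2)·y^Y + O(y^{Y−1}) as y → +∞; that is, there exist C > 0 and y₀ > 0 such that |(M − (a+iy))^Y + (G + (a+iy))^Y − 2 cos(πY/2) y^Y| ≤ C y^{Y−1} for all y ≥ y₀. -/
/-!
Both bases are horizontal translates of `∓iy`: `M - (a + iy) = -iy + (M - a)` and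
`G + (a + iy) = iy + (G + a)`. On a horizontal line `Im z = Im w ≠ 0` the derivative
`Y z^(Y-1)` of `z ↦ z^Y` has norm `|Y| |z|^(Y-1) ≤ |Y| |Im w|^(Y-1)` because `Y ≤ 1`, so by the
mean value theorem a real shift of the base moves the power by `O(y^(Y-1))`. The leading terms
`(iy)^Y` and `(-iy)^Y` are complex conjugates, with sum `2 Re (iy)^Y = 2 y^Y cos(πY/2)`.
-/

open Complex ComplexConjugate

lemma norm_cpow_add_ofReal_sub_cpow_le {w : ℂ} (hw : w.im ≠ 0) {Y : ℝ} (hY : Y ≤ 1) (b : ℝ) :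
    ‖(w + b) ^ (Y : ℂ) - w ^ (Y : ℂ)‖ ≤ |Y| * |w.im| ^ (Y - 1) * |b| := by
  set L : Set ℂ := {z | z.im ≤ w.im} ∩ {z | w.im ≤ z.im}
  have hL : ∀ z ∈ L, z.im = w.im := fun z hz => le_antisymm hz.1 hz.2
  have hderiv :
      ∀ z ∈ L, HasDerivWithinAt (fun z : ℂ => z ^ (Y : ℂ)) (Y * z ^ ((Y : ℂ) - 1)) L z :=
    fun z hz => (hasStrictDerivAt_cpow_const (.inr (by rw [hL z hz]; exact hw))).hasDerivAt
      |>.hasDerivWithinAt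
  have hbound : ∀ z ∈ L, ‖(Y : ℂ) * z ^ ((Y : ℂ) - 1)‖ ≤ |Y| * |w.im| ^ (Y - 1) := by
    intro z hz
    have him_le : |w.im| ≤ ‖z‖ := hL z hz ▸ abs_im_le_norm z
    rw [norm_mul, norm_real, Real.norm_eq_abs, ← ofReal_one, ← ofReal_sub, norm_cpow_real]
    exact mul_le_mul_of_nonneg_left
      (Real.rpow_le_rpow_of_nonpos (abs_pos.mpr hw) him_le (by linarith)) (abs_nonneg Y)
  have hwL : w ∈ L := by simp [L]
  have hwb : w + b ∈ L := by simp [L]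
  simpa using ((convex_halfSpace_im_le w.im).inter (convex_halfSpace_im_ge w.im)
    |>.norm_image_sub_le_of_norm_hasDerivWithin_le hderiv hbound hwL hwb)

lemma ofReal_mul_I_cpow_add_ofReal_mul_neg_I_cpow {y : ℝ} (hy : 0 < y) (Y : ℝ) :
    (y * I) ^ (Y : ℂ) + (y * -I) ^ (Y : ℂ) =
      2 * (Real.cos (Real.pi * Y / 2) : ℂ) * (y : ℂ) ^ (Y : ℂ) := by
  have harg : arg (y * I) = Real.pi / 2 := by rw [arg_real_mul _ hy, arg_I]
  have hconj : (y * -I : ℂ) = conj (y * I) := by simp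
  rw [hconj, conj_cpow _ _ (by rw [harg]; linarith [Real.pi_pos]), conj_ofReal, add_conj,
    cpow_ofReal_re, harg, ← ofReal_cpow hy.le, norm_mul, norm_I, mul_one, norm_real,
    Real.norm_of_nonneg hy.le, show Real.pi / 2 * Y = Real.pi * Y / 2 by ring]
  push_cast
  ring

theorem cgmy_exponent_asymptotics_general
    (Y G M a : ℝ) (hY1 : Y < 1) :
    ∃ C : ℝ, 0 < C ∧ ∃ y₀ : ℝ, 0 < y₀ ∧ ∀ y : ℝ, y₀ ≤ y →
      ‖((M : ℂ) - ((a : ℂ) + y * Complex.I)) ^ (Y : ℂ)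
          + ((G : ℂ) + ((a : ℂ) + y * Complex.I)) ^ (Y : ℂ)
          - 2 * (Real.cos (Real.pi * Y / 2) : ℂ) * (y : ℂ) ^ (Y : ℂ)‖
        ≤ C * y ^ (Y - 1) := by
  refine ⟨|Y| * (|M - a| + |G + a|) + 1, by positivity, 1, one_pos, fun y hy => ?_⟩
  have hy0 : 0 < y := one_pos.trans_le hy
  have hM : (M : ℂ) - (a + y * I) = y * -I + (M - a : ℝ) := by push_cast; ring
  have hG : (G : ℂ) + (a + y * I) = y * I + (G + a : ℝ) := by push_cast; ring
  have hMbound :=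
    norm_cpow_add_ofReal_sub_cpow_le (w := y * -I) (by simp [hy0.ne']) hY1.le (M - a)
  have hGbound :=
    norm_cpow_add_ofReal_sub_cpow_le (w := y * I) (by simp [hy0.ne']) hY1.le (G + a)
  rw [show |((y : ℂ) * -I).im| = y by simp [hy0.le]] at hMbound
  rw [show |((y : ℂ) * I).im| = y by simp [hy0.le]] at hGbound
  rw [hM, hG, ← ofReal_mul_I_cpow_add_ofReal_mul_neg_I_cpow hy0]
  calc _ = ‖((y * -I + (M - a : ℝ)) ^ (Y : ℂ) - (y * -I) ^ (Y : ℂ))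
          + ((y * I + (G + a : ℝ)) ^ (Y : ℂ) - (y * I) ^ (Y : ℂ))‖ := by ring_nf
    _ ≤ |Y| * y ^ (Y - 1) * |M - a| + |Y| * y ^ (Y - 1) * |G + a| :=
      (norm_add_le _ _).trans (add_le_add hMbound hGbound)
    _ ≤ (|Y| * (|M - a| + |G + a|) + 1) * y ^ (Y - 1) := by
      nlinarith [Real.rpow_nonneg hy0.le (Y - 1)]

/-- CGMY characteristic exponent asymptotics along a vertical line:
for `0 < Y < 1` and `−G < a < M`, with principal-branch complex powers,
`(M−(a+iy))^Y + (G+(a+iy))^Y = 2 cos(πY/2) y^Y + O(y^{Y−1})` as `y → +∞`. -/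
theorem cgmy_exponent_asymptotics
    (Y G M a : ℝ) (hY0 : 0 < Y) (hY1 : Y < 1) (haG : -G < a) (haM : a < M) :
    ∃ C : ℝ, 0 < C ∧ ∃ y₀ : ℝ, 0 < y₀ ∧ ∀ y : ℝ, y₀ ≤ y →
      ‖((M : ℂ) - ((a : ℂ) + y * Complex.I)) ^ (Y : ℂ)
          + ((G : ℂ) + ((a : ℂ) + y * Complex.I)) ^ (Y : ℂ)
          - 2 * (Real.cos (Real.pi * Y / 2) : ℂ) * (y : ℂ) ^ (Y : ℂ)‖
        ≤ C * y ^ (Y - 1) :=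
  cgmy_exponent_asymptotics_general Y G M a hY1
end

section
/- Let C > 0, 0 < Y < 1, G > 0, M > 1, and define b = −C·Γ(−Y)·((M−1)^Y − M^Y + (G+1)^Y − G^Y), where Γ is the real Gamma function. Then b < 0 if and only if M − 1 < G. -/
/-!
The bracket in `b` is `φ(G) - φ(M - 1)` with `φ x = (x + 1)^Y - x^Y`, the increment of the
strictly concave function `x ↦ x^Y` over a unit step; such increments strictly decrease along
`[0, ∞)`. Since `Γ(-Y) < 0`, the prefactor `-C Γ(-Y)` is positive, so `b < 0` exactly when
`φ(G) < φ(M - 1)`, i.e. when `M - 1 < G`.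
-/

open Set

theorem StrictConcaveOn.strictAntiOn_sub_shift {s : Set ℝ} {f : ℝ → ℝ}
    (hf : StrictConcaveOn ℝ s f) {h : ℝ} (hh : 0 < h) :
    StrictAntiOn (fun x => f (x + h) - f x) {x | x ∈ s ∧ x + h ∈ s} := by
  rintro a ⟨ha, hah⟩ b ⟨hb, hbh⟩ hab
  -- Both unit secants are compared with the long secant from `a` to `b + h`.
  have near_a : (f (b + h) - f a) / (b + h - a) < (f (a + h) - f a) / (a + h - a) :=
    hf.secant_strict_mono ha hah hbh (by linarith) (by linarith) (by linarith)
  have near_bh : (f b - f (b + h)) / (b - (b + h)) < (f a - f (b + h)) / (a - (b + h)) :=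
    hf.secant_strict_mono hbh ha hb (by linarith) (by linarith) hab
  have hslope : (f (b + h) - f b) / h < (f (a + h) - f a) / h := by
    calc (f (b + h) - f b) / h = (f b - f (b + h)) / (b - (b + h)) := by
          rw [← neg_div_neg_eq]; ring_nf
      _ < (f a - f (b + h)) / (a - (b + h)) := near_bh
      _ = (f (b + h) - f a) / (b + h - a) := by rw [← neg_div_neg_eq]; ring_nf
      _ < (f (a + h) - f a) / (a + h - a) := near_a
      _ = (f (a + h) - f a) / h := by ring_nf
  exact (div_lt_div_iff_of_pos_right hh).mp hslope

theorem Real.strictAntiOn_rpow_add_one_sub_rpow {p : ℝ} (hp₀ : 0 < p) (hp₁ : p < 1) :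
    StrictAntiOn (fun x : ℝ => (x + 1) ^ p - x ^ p) (Ici 0) :=
  ((Real.strictConcaveOn_rpow hp₀ hp₁).strictAntiOn_sub_shift one_pos).mono
    fun _ hx => ⟨hx, mem_Ici.mpr (by linarith [mem_Ici.mp hx])⟩

theorem Real.Gamma_neg_of_mem_Ioo {s : ℝ} (hs : s ∈ Ioo (-1) 0) : Real.Gamma s < 0 := by
  have hrec : Real.Gamma (s + 1) = s * Real.Gamma s := Real.Gamma_add_one hs.2.ne
  have hpos : 0 < Real.Gamma (s + 1) := Real.Gamma_pos_of_pos (by linarith [hs.1])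
  exact neg_of_mul_pos_right (hrec ▸ hpos) hs.2.le

/-- sign of the CGMY martingale drift.
For `C > 0`, `0 < Y < 1`, `G > 0`, `M > 1`, the drift
`b = −C Γ(−Y)((M−1)^Y − M^Y + (G+1)^Y − G^Y)` is negative iff `M − 1 < G`. -/
theorem cgmy_drift_sign
    (C Y G M : ℝ) (hC : 0 < C) (hY0 : 0 < Y) (hY1 : Y < 1) (hG : 0 < G) (hM : 1 < M)
    (b : ℝ)
    (hb : b = -C * Real.Gamma (-Y) * ((M - 1) ^ Y - M ^ Y + (G + 1) ^ Y - G ^ Y)) :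
    b < 0 ↔ M - 1 < G := by
  set φ : ℝ → ℝ := fun x => (x + 1) ^ Y - x ^ Y
  have hK : 0 < -C * Real.Gamma (-Y) :=
    mul_pos_of_neg_of_neg (neg_lt_zero.mpr hC)
      (Real.Gamma_neg_of_mem_Ioo ⟨by linarith, by linarith⟩)
  have hb' : b = -C * Real.Gamma (-Y) * (φ G - φ (M - 1)) := by
    rw [hb]; simp only [φ, sub_add_cancel]; ring
  rw [hb', ← smul_eq_mul, smul_neg_iff_of_pos_left hK, sub_neg]
  exact StrictAntiOn.lt_iff_gt (Real.strictAntiOn_rpow_add_one_sub_rpow hY0 hY1)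
      (mem_Ici.mpr hG.le) (mem_Ici.mpr (by linarith))
end
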